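/- Let β ⊆ α be compositions with N = |α|−|β| ≥ 1. For every T ∈ SIT(α/β) with T ≠ S^{row}_{α/β}, there exist indices j_1, …, j_r (1 ≤ j_i ≤ N−1) and pairwise distinct tableaux T_0 = T, T_1, …, T_r = S^{row}_{α/β} in SIT(α/β) such that π_{j_i}^{rdI}(T_{i−1}) = T_i for i = 1, …, r; consequently S^{row}_{α/β} = π_{j_r}^{rdI} π_{j_{r−1}}^{rdI} ⋯ π_{j_1}^{rdI}(T). In particular, S^{row}_{α/β} is the unique maximal element of the partial order on SIT(α/β) in which S ⪯ T whenever T is obtained from S by applying a sequence of the operators π_i^{rdI}. -/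
import Mathlib


open scoped Classical

namespace ImmaculateSkew

/-- `part α i` is the `i`-th part (0-indexed) of the composition `α`, or `0` if out of range. -/
def part (α : List ℕ) (i : ℕ) : ℕ := α.getD i 0

/-- a composition: a list of positive integers -/
def IsComposition (α : List ℕ) : Prop := ∀ x ∈ α, 0 < x

/-- `β ⊆ α` for compositions -/
def SubComp (β α : List ℕ) : Prop :=
  β.length ≤ α.length ∧ ∀ j < β.length, part β j ≤ part α j

/-- cell `(i, j)` (row `i` from the bottom, column `j`, both 0-indexed) lies in the diagram of `α` -/
def InDiagram (α : List ℕ) (c : ℕ × ℕ) : Prop :=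
  c.1 < α.length ∧ c.2 < part α c.1

/-- cell lies in the skew diagram `α/β` -/
def InSkew (α β : List ℕ) (c : ℕ × ℕ) : Prop :=
  InDiagram α c ∧ ¬ InDiagram β c

/-- the finite set of cells of the skew diagram `α/β` -/
noncomputable def skewCells (α β : List ℕ) : Finset (ℕ × ℕ) :=
  (Finset.range α.length ×ˢ Finset.range (α.sum + 1)).filter (InSkew α β)

/-- `N = |α| - |β|` -/
def skewSize (α β : List ℕ) : ℕ := α.sum - β.sum

/-- a filling of the cells of `α/β` using each entry of `E` exactly once, zero off the diagram -/
structure IsStdOn (α β : List ℕ) (E : Finset ℕ) (T : ℕ × ℕ → ℕ) : Prop where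
  zero_off : ∀ c, ¬ InSkew α β c → T c = 0
  mem : ∀ c, InSkew α β c → T c ∈ E
  inj : ∀ c c', InSkew α β c → InSkew α β c' → T c = T c' → c = c'
  surj : ∀ v ∈ E, ∃ c, InSkew α β c ∧ T c = v

/-- row entries strictly increase left to right -/
def RowsStrict (α β : List ℕ) (T : ℕ × ℕ → ℕ) : Prop :=
  ∀ i j j', j < j' → InSkew α β (i, j) → InSkew α β (i, j') → T (i, j) < T (i, j')

/-- row entries weakly increase left to right -/
def RowsWeak (α β : List ℕ) (T : ℕ × ℕ → ℕ) : Prop :=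
  ∀ i j j', j < j' → InSkew α β (i, j) → InSkew α β (i, j') → T (i, j) ≤ T (i, j')

/-- all column entries strictly increase bottom to top -/
def ColsStrict (α β : List ℕ) (T : ℕ × ℕ → ℕ) : Prop :=
  ∀ i i' j, i < i' → InSkew α β (i, j) → InSkew α β (i', j) → T (i, j) < T (i', j)

/-- all column entries weakly increase bottom to top -/
def ColsWeak (α β : List ℕ) (T : ℕ × ℕ → ℕ) : Prop :=
  ∀ i i' j, i < i' → InSkew α β (i, j) → InSkew α β (i', j) → T (i, j) ≤ T (i', j)

/-- the column-1 entries (those in `α/β`) strictly increase bottom to top -/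
def FirstColStrict (α β : List ℕ) (T : ℕ × ℕ → ℕ) : Prop :=
  ∀ i i', i < i' → InSkew α β (i, 0) → InSkew α β (i', 0) → T (i, 0) < T (i', 0)

/-- the column-1 entries (those in `α/β`) weakly increase bottom to top -/
def FirstColWeak (α β : List ℕ) (T : ℕ × ℕ → ℕ) : Prop :=
  ∀ i i', i < i' → InSkew α β (i, 0) → InSkew α β (i', 0) → T (i, 0) ≤ T (i', 0)

/-- standard immaculate tableau of shape `α/β` with entry set `E` -/
def IsSITOn (α β : List ℕ) (E : Finset ℕ) (T : ℕ × ℕ → ℕ) : Prop :=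
  IsStdOn α β E T ∧ RowsStrict α β T ∧ FirstColStrict α β T

/-- standard immaculate tableau of shape `α/β` (entries `1, …, N`) -/
def IsSIT (α β : List ℕ) (T : ℕ × ℕ → ℕ) : Prop :=
  IsSITOn α β (Finset.Icc 1 (skewSize α β)) T

/-- standard extended tableau: all columns increase bottom to top -/
def IsSET (α β : List ℕ) (T : ℕ × ℕ → ℕ) : Prop :=
  IsSIT α β T ∧ ColsStrict α β T

/-- the four descent-set variants -/
inductive Variant | dI | rdI | Astar | Abar

/-- `rowRel a r r'`: the relation required between the row `r` containing `i` and the row `r'`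
containing `i+1` for `i` to be an `a`-descent -/
def rowRel : Variant → ℕ → ℕ → Prop
  | .dI    => fun r r' => r < r'
  | .rdI   => fun r r' => r' ≤ r
  | .Astar => fun r r' => r' < r
  | .Abar  => fun r r' => r ≤ r'

/-- the `a`-descent set of a tableau -/
noncomputable def Des (a : Variant) (α β : List ℕ) (T : ℕ × ℕ → ℕ) : Finset ℕ :=
  (Finset.Icc 1 (skewSize α β - 1)).filter fun k =>
    ∃ c c', InSkew α β c ∧ InSkew α β c' ∧ T c = k ∧ T c' = k + 1 ∧ rowRel a c.1 c'.1

/-- interchange the entries `i` and `i+1` -/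
def swapEntries (i : ℕ) (T : ℕ × ℕ → ℕ) : ℕ × ℕ → ℕ :=
  fun c => if T c = i then i + 1 else if T c = i + 1 then i else T c

/-- the 0-Hecke operator `π_i^a` on `SIT(α/β) ∪ {0}` (the zero function plays the role of `0`) -/
noncomputable def piOp (a : Variant) (α β : List ℕ) (i : ℕ) (T : ℕ × ℕ → ℕ) : ℕ × ℕ → ℕ :=
  if i ∈ Des a α β T then
    (if IsSIT α β (swapEntries i T) then swapEntries i T else fun _ => 0)
  else T

/-- the fundamental quasisymmetric function `F_{comp(D)}` for `D ⊆ {1,…,N-1}`, as a power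
series in the variables `x_1, x_2, …` (variable `x_n` is `X n`; `x_0` is unused) -/
noncomputable def Fund (N : ℕ) (D : Finset ℕ) : MvPowerSeries ℕ ℚ :=
  fun d => (Nat.card {f : Fin N → ℕ //
    (∀ j, 1 ≤ f j) ∧
    (∀ j k : Fin N, j ≤ k → f j ≤ f k) ∧
    (∀ (j : ℕ) (_ : 1 ≤ j) (h2 : j < N), j ∈ D → f ⟨j - 1, by omega⟩ < f ⟨j, h2⟩) ∧
    (∑ j, Finsupp.single (f j) 1) = d} : ℚ)

/-- the generating function `Σ_T x^T` over all fillings of the given cells with positive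
integers satisfying the predicate `P` (and equal to `0` off the given cells) -/
noncomputable def genF (cs : Finset (ℕ × ℕ)) (P : (ℕ × ℕ → ℕ) → Prop) :
    MvPowerSeries ℕ ℚ :=
  fun d => (Nat.card {T : ℕ × ℕ → ℕ //
    (∀ c, c ∉ cs → T c = 0) ∧ (∀ c ∈ cs, 1 ≤ T c) ∧ P T ∧
    (∑ c ∈ cs, Finsupp.single (T c) 1) = d} : ℚ)

/-- complete homogeneous symmetric function `h_r` -/
noncomputable def hFun (r : ℕ) : MvPowerSeries ℕ ℚ :=
  fun d => (Nat.card {f : Fin r → ℕ //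
    (∀ j, 1 ≤ f j) ∧ (∀ j k : Fin r, j ≤ k → f j ≤ f k) ∧
    (∑ j, Finsupp.single (f j) 1) = d} : ℚ)

/-- elementary symmetric function `e_r` -/
noncomputable def eFun (r : ℕ) : MvPowerSeries ℕ ℚ :=
  fun d => (Nat.card {f : Fin r → ℕ //
    (∀ j, 1 ≤ f j) ∧ (∀ j k : Fin r, j < k → f j < f k) ∧
    (∑ j, Finsupp.single (f j) 1) = d} : ℚ)

/-- send a filling to the corresponding basis vector of the free `ℚ`-vector space on
`SIT(α/β)`, or to the zero vector if it is not a standard immaculate tableau -/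
noncomputable def toBasis (α β : List ℕ) (U : ℕ × ℕ → ℕ) :
    ({T : ℕ × ℕ → ℕ // IsSIT α β T} →₀ ℚ) :=
  if h : IsSIT α β U then Finsupp.single ⟨U, h⟩ 1 else 0

/-- the linear extension of `π_i^a` to the free `ℚ`-vector space on `SIT(α/β)` -/
noncomputable def piLin (a : Variant) (α β : List ℕ) (i : ℕ) :
    ({T : ℕ × ℕ → ℕ // IsSIT α β T} →₀ ℚ) →ₗ[ℚ]
      ({T : ℕ × ℕ → ℕ // IsSIT α β T} →₀ ℚ) :=
  Finsupp.lift _ ℚ _ (fun T => toBasis α β (piOp a α β i T.1))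

/-- one step: the tableau `T` is obtained from `S` by applying one operator `π_i^a` -/
def stepRel (a : Variant) (α β : List ℕ) (S T : ℕ × ℕ → ℕ) : Prop :=
  IsSIT α β T ∧ ∃ i, 1 ≤ i ∧ i ≤ skewSize α β - 1 ∧ piOp a α β i S = T

/-- `T` is obtained from `S` by applying a (possibly empty) sequence of operators `π_i^a`,
all intermediate results being tableaux -/
def reach (a : Variant) (α β : List ℕ) : (ℕ × ℕ → ℕ) → (ℕ × ℕ → ℕ) → Prop :=
  Relation.ReflTransGen (stepRel a α β)

/-- the number of skew cells of `α/β` strictly above row `i` other than column-1 cells -/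
noncomputable def aboveCount (α β : List ℕ) (i : ℕ) : ℕ :=
  ∑ i' ∈ Finset.Ico (i + 1) α.length,
    (if i' < β.length then part α i' - part β i' else part α i' - 1)

/-- the tableau `S^0_{α/β}`: the column-1 cells of `α/β` are filled with `1, …, ℓ(α)-ℓ(β)`
bottom to top, then the remaining cells are filled row by row, top to bottom, left to right,
with consecutive integers -/
noncomputable def S0 (α β : List ℕ) : ℕ × ℕ → ℕ :=
  fun c =>
    if InSkew α β c then
      if c.2 = 0 ∧ β.length ≤ c.1 then c.1 - β.length + 1
      else (α.length - β.length) + aboveCount α β c.1 +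
        (if c.1 < β.length then c.2 - part β c.1 + 1 else c.2)
    else 0

/-- the row superstandard tableau `S^{row}_{α/β}`: rows filled left to right with `1, 2, …, N`,
bottom row first -/
noncomputable def Srow (α β : List ℕ) : ℕ × ℕ → ℕ :=
  fun c =>
    if InSkew α β c then
      (∑ i' ∈ Finset.range c.1, (part α i' - part β i')) + (c.2 - part β c.1 + 1)
    else 0

/-- `c` is read before `c'` in the reading word (rows top to bottom, right to left in a row) -/
def readBefore (c c' : ℕ × ℕ) : Prop :=
  c'.1 < c.1 ∨ (c.1 = c'.1 ∧ c'.2 < c.2)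

/-- the number of inversions of the reading word of a tableau of shape `α/β` -/
noncomputable def invNum (α β : List ℕ) (T : ℕ × ℕ → ℕ) : ℕ :=
  ((skewCells α β ×ˢ skewCells α β).filter
    (fun p => readBefore p.1 p.2 ∧ T p.2 < T p.1)).card

/-- `φ_U(T)`: fill the cells of `β` by `U` and those of `α/β` by `T` with all entries of `T`
shifted up by `m = |β|` -/
noncomputable def phiU (α β : List ℕ) (U T : ℕ × ℕ → ℕ) : ℕ × ℕ → ℕ :=
  fun c => if InDiagram β c then U c else if InSkew α β c then T c + β.sum else 0

/-- restriction `T_{≤ m}` of `T` to entries `≤ m` -/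
def restrLe (m : ℕ) (T : ℕ × ℕ → ℕ) : ℕ × ℕ → ℕ :=
  fun c => if T c ≤ m then T c else 0

/-- restriction `T_{> m}` of `T` to entries `> m` -/
def restrGt (m : ℕ) (T : ℕ × ℕ → ℕ) : ℕ × ℕ → ℕ :=
  fun c => if m < T c then T c else 0

/-- standardisation `std(T_{>m})`: keep the entries `> m` and subtract `m` from each -/
def stdGt (m : ℕ) (T : ℕ × ℕ → ℕ) : ℕ × ℕ → ℕ :=
  fun c => if m < T c then T c - m else 0

/-- `T ∈ X_{α,β}`: `T ∈ SIT(α)` and the entries `> |β|` of `T` occupy exactly the cells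
of `α/β` -/
def memX (α β : List ℕ) (T : ℕ × ℕ → ℕ) : Prop :=
  IsSIT α [] T ∧ ∀ c, InDiagram α c → (β.sum < T c ↔ ¬ InDiagram β c)

/-! ### Auxiliary lemmas for Statement 15 -/

section Aux

open Finset

/-- partial sums of the row lengths of the skew shape -/
noncomputable def SS (α β : List ℕ) (i : ℕ) : ℕ :=
  ∑ i' ∈ Finset.range i, (part α i' - part β i')

lemma part_eq_zero_of_le {γ : List ℕ} {i : ℕ} (h : γ.length ≤ i) : part γ i = 0 :=
  List.getD_eq_default _ _ h

lemma inSkew_iff {α β : List ℕ} {i j : ℕ} :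
    InSkew α β (i, j) ↔ i < α.length ∧ part β i ≤ j ∧ j < part α i := by
  unfold InSkew InDiagram
  by_cases hb : i < β.length
  · simp only [hb, true_and]
    constructor
    · rintro ⟨⟨h1, h2⟩, h3⟩; exact ⟨h1, by omega, h2⟩
    · rintro ⟨h1, h2, h3⟩; exact ⟨⟨h1, h3⟩, by omega⟩
  · have : part β i = 0 := part_eq_zero_of_le (by omega)
    simp only [this, Nat.zero_le, true_and]
    constructor
    · rintro ⟨⟨h1, h2⟩, _⟩; exact ⟨h1, h2⟩
    · rintro ⟨h1, h2⟩; exact ⟨⟨h1, h2⟩, by omega⟩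

lemma sum_getD_eq (γ : List ℕ) : ∑ i ∈ Finset.range γ.length, part γ i = γ.sum := by
  induction γ with
  | nil => simp [part]
  | cons x xs ih =>
    simp only [List.length_cons, List.sum_cons]
    rw [Finset.sum_range_succ']
    simp only [part, List.getD_cons_succ, List.getD_cons_zero] at *
    rw [ih]; omega

lemma sum_getD_eq_of_le {γ : List ℕ} {n : ℕ} (h : γ.length ≤ n) :
    ∑ i ∈ Finset.range n, part γ i = γ.sum := by
  rw [← sum_getD_eq γ]
  apply (Finset.sum_subset (Finset.range_subset_range.2 h) _).symm
  intro i _ hi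
  exact part_eq_zero_of_le (by simp at hi; omega)

lemma part_le_sum {γ : List ℕ} {i : ℕ} : part γ i ≤ γ.sum := by
  by_cases h : i < γ.length
  · rw [← sum_getD_eq γ]
    exact Finset.single_le_sum (f := fun i => part γ i) (fun _ _ => Nat.zero_le _)
      (Finset.mem_range.2 h)
  · rw [part_eq_zero_of_le (by omega)]; exact Nat.zero_le _

lemma mem_skewCells {α β : List ℕ} {c : ℕ × ℕ} :
    c ∈ skewCells α β ↔ InSkew α β c := by
  unfold skewCells
  simp only [Finset.mem_filter, Finset.mem_product, Finset.mem_range]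
  constructor
  · exact fun h => h.2
  · intro h
    refine ⟨⟨h.1.1, ?_⟩, h⟩
    have := h.1.2
    have : part α c.1 ≤ α.sum := part_le_sum
    omega

variable {α β : List ℕ}

lemma part_le_part (hsub : SubComp β α) {i : ℕ} : part β i ≤ part α i := by
  by_cases h : i < β.length
  · exact hsub.2 i h
  · rw [part_eq_zero_of_le (by omega)]; exact Nat.zero_le _

lemma SS_succ (i : ℕ) : SS α β (i + 1) = SS α β i + (part α i - part β i) :=
  Finset.sum_range_succ _ _

lemma SS_mono : Monotone (SS α β) := by
  intro i j hij
  exact Finset.sum_le_sum_of_subset (Finset.range_subset_range.2 hij)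

lemma SS_top (hsub : SubComp β α) : SS α β α.length = skewSize α β := by
  unfold SS skewSize
  rw [← sum_getD_eq α, ← sum_getD_eq_of_le (γ := β) hsub.1]
  rw [Finset.sum_tsub_distrib]
  intro i _
  exact part_le_part hsub

lemma srow_apply {i j : ℕ} (h : InSkew α β (i, j)) :
    Srow α β (i, j) = SS α β i + (j - part β i) + 1 := by
  unfold Srow
  rw [if_pos h]
  simp only [SS]
  have : part β i ≤ j := (inSkew_iff.1 h).2.1
  omega

lemma srow_bounds {i j : ℕ} (h : InSkew α β (i, j)) :
    SS α β i < Srow α β (i, j) ∧ Srow α β (i, j) ≤ SS α β (i + 1) := by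
  rw [srow_apply h, SS_succ]
  obtain ⟨h1, h2, h3⟩ := inSkew_iff.1 h
  omega

lemma srow_inj {c c' : ℕ × ℕ} (hc : InSkew α β c) (hc' : InSkew α β c')
    (h : Srow α β c = Srow α β c') : c = c' := by
  obtain ⟨i, j⟩ := c; obtain ⟨i', j'⟩ := c'
  have b1 := srow_bounds hc
  have b2 := srow_bounds hc'
  have hii : i = i' := by
    rcases Nat.lt_trichotomy i i' with hlt | heq | hgt
    · have : SS α β (i + 1) ≤ SS α β i' := SS_mono hlt
      omega
    · exact heq
    · have : SS α β (i' + 1) ≤ SS α β i := SS_mono hgt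
      omega
  subst hii
  rw [srow_apply hc, srow_apply hc'] at h
  have h1 := (inSkew_iff.1 hc).2.1
  have h2 := (inSkew_iff.1 hc').2.1
  simp only [Prod.mk.injEq, true_and]
  omega

lemma srow_surj (hsub : SubComp β α) {v : ℕ} (hv1 : 1 ≤ v) (hv2 : v ≤ skewSize α β) :
    ∃ c, InSkew α β c ∧ Srow α β c = v := by
  have hvtop : v ≤ SS α β α.length := by rw [SS_top hsub]; exact hv2
  have hex : ∃ n, v ≤ SS α β (n + 1) := by
    rcases Nat.eq_zero_or_pos α.length with h0 | h0
    · exfalso; unfold SS at hvtop; rw [h0] at hvtop; simp at hvtop; omega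
    · exact ⟨α.length - 1, by
        have : α.length - 1 + 1 = α.length := by omega
        rw [this]; exact hvtop⟩
  classical
  set i := Nat.find hex with hi
  have hfind : v ≤ SS α β (i + 1) := Nat.find_spec hex
  have hlow : SS α β i < v := by
    rcases Nat.eq_zero_or_pos i with h0 | h0
    · rw [h0]; unfold SS; simp; omega
    · have := Nat.find_min hex (m := i - 1) (by omega)
      have hh : i - 1 + 1 = i := by omega
      rw [hh] at this; omega
  have hilen : i < α.length := by
    by_contra hcon
    have : SS α β α.length ≤ SS α β i := SS_mono (by omega)
    omega
  rw [SS_succ] at hfind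
  set j := part β i + (v - SS α β i - 1) with hj
  have hskew : InSkew α β (i, j) := inSkew_iff.2 ⟨hilen, by omega, by omega⟩
  exact ⟨(i, j), hskew, by rw [srow_apply hskew]; omega⟩

lemma isSIT_srow (hsub : SubComp β α) : IsSIT α β (Srow α β) := by
  refine ⟨⟨?_, ?_, ?_, ?_⟩, ?_, ?_⟩
  · intro c hc; unfold Srow; rw [if_neg hc]
  · intro c hc
    obtain ⟨i, j⟩ := c
    have b := srow_bounds hc
    have h3 : i + 1 ≤ α.length := (inSkew_iff.1 hc).1
    have : SS α β (i + 1) ≤ SS α β α.length := SS_mono h3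
    rw [SS_top hsub] at this
    rw [Finset.mem_Icc]
    omega
  · intro c c' hc hc'; exact srow_inj hc hc'
  · intro v hv
    rw [Finset.mem_Icc] at hv
    obtain ⟨c, h1, h2⟩ := srow_surj hsub hv.1 hv.2
    exact ⟨c, h1, h2⟩
  · intro i j j' hjj hc hc'
    rw [srow_apply hc, srow_apply hc']
    have h1 := (inSkew_iff.1 hc).2.1
    omega
  · intro i i' hii hc hc'
    have b := srow_bounds hc
    have b' := srow_bounds hc'
    have : SS α β (i + 1) ≤ SS α β i' := SS_mono hii
    omega

/-- entry-counting: the number of cells with entry `≤ T c` equals `T c` -/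
lemma card_filter_le {T : ℕ × ℕ → ℕ} (hT : IsSIT α β T) {c : ℕ × ℕ}
    (hc : InSkew α β c) :
    ((skewCells α β).filter (fun x => T x ≤ T c)).card = T c := by
  classical
  have hmem := hT.1.mem c hc
  rw [Finset.mem_Icc] at hmem
  have hbij : ((skewCells α β).filter (fun x => T x ≤ T c)).card =
      ((Finset.Icc 1 (skewSize α β)).filter (fun w => w ≤ T c)).card := by
    apply Finset.card_bij (fun x _ => T x)
    · intro x hx
      rw [Finset.mem_filter] at hx ⊢
      exact ⟨hT.1.mem x (mem_skewCells.1 hx.1), hx.2⟩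
    · intro x hx y hy hxy
      rw [Finset.mem_filter] at hx hy
      exact hT.1.inj x y (mem_skewCells.1 hx.1) (mem_skewCells.1 hy.1) hxy
    · intro w hw
      rw [Finset.mem_filter] at hw
      obtain ⟨x, hx1, hx2⟩ := hT.1.surj w hw.1
      exact ⟨x, Finset.mem_filter.2 ⟨mem_skewCells.2 hx1, by rw [hx2]; exact hw.2⟩, hx2⟩
  rw [hbij]
  have : (Finset.Icc 1 (skewSize α β)).filter (fun w => w ≤ T c) = Finset.Icc 1 (T c) := by
    ext w
    simp only [Finset.mem_filter, Finset.mem_Icc]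
    omega
  rw [this, Nat.card_Icc]
  omega

/-- if every pair of consecutive entries has rows weakly increasing, entries' rows are
monotone overall -/
lemma rows_mono {T : ℕ × ℕ → ℕ} (hT : IsSIT α β T)
    (h : ∀ v c c', InSkew α β c → InSkew α β c' → T c = v → T c' = v + 1 →
      1 ≤ v → v + 1 ≤ skewSize α β → c.1 ≤ c'.1) :
    ∀ d w c c', InSkew α β c → InSkew α β c' → T c = w → T c' = w + d →
      1 ≤ w → w + d ≤ skewSize α β → c.1 ≤ c'.1 := by
  intro d
  induction d with
  | zero =>
    intro w c c' hc hc' h1 h2 _ _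
    have : c = c' := hT.1.inj c c' hc hc' (by omega)
    rw [this]
  | succ d ih =>
    intro w c c' hc hc' h1 h2 hw1 hw2
    obtain ⟨m, hm1, hm2⟩ := hT.1.surj (w + d) (Finset.mem_Icc.2 ⟨by omega, by omega⟩)
    have s1 : c.1 ≤ m.1 := ih w c m hc hm1 h1 hm2 hw1 (by omega)
    have s2 : m.1 ≤ c'.1 := h (w + d) m c' hm1 hc' hm2 (by omega) (by omega) (by omega)
    omega

lemma le_iff_pos_T {T : ℕ × ℕ → ℕ} (hT : IsSIT α β T)
    (h : ∀ v c c', InSkew α β c → InSkew α β c' → T c = v → T c' = v + 1 →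
      1 ≤ v → v + 1 ≤ skewSize α β → c.1 ≤ c'.1)
    {c x : ℕ × ℕ} (hc : InSkew α β c) (hx : InSkew α β x) :
    T x ≤ T c ↔ (x.1 < c.1 ∨ (x.1 = c.1 ∧ x.2 ≤ c.2)) := by
  obtain ⟨ci, cj⟩ := c
  obtain ⟨xi, xj⟩ := x
  have hmc := hT.1.mem _ hc
  have hmx := hT.1.mem _ hx
  rw [Finset.mem_Icc] at hmc hmx
  simp only at *
  constructor
  · intro hle
    by_cases heq : ((xi, xj) : ℕ × ℕ) = (ci, cj)
    · simp only [Prod.mk.injEq] at heq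
      omega
    · have hne : T (xi, xj) ≠ T (ci, cj) := fun he => heq (hT.1.inj _ _ hx hc he)
      have hlt : T (xi, xj) < T (ci, cj) := by omega
      have hrow : xi ≤ ci :=
        rows_mono hT h (T (ci, cj) - T (xi, xj)) (T (xi, xj)) (xi, xj) (ci, cj)
          hx hc rfl (by omega) (by omega) (by omega)
      rcases Nat.lt_or_ge xi ci with h1 | h1
      · left; exact h1
      · right
        have hxc : xi = ci := by omega
        subst hxc
        refine ⟨rfl, ?_⟩
        by_contra hcon
        have h3 : cj < xj := by omega
        have := hT.2.1 xi cj xj h3 hc hx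
        omega
  · intro hcond
    rcases hcond with h1 | ⟨h1, h2⟩
    · by_contra hcon
      have hlt : T (ci, cj) < T (xi, xj) := by omega
      have : ci ≤ xi :=
        rows_mono hT h (T (xi, xj) - T (ci, cj)) (T (ci, cj)) (ci, cj) (xi, xj)
          hc hx rfl (by omega) (by omega) (by omega)
      omega
    · subst h1
      rcases Nat.lt_or_ge xj cj with h3 | h3
      · have := hT.2.1 xi xj cj h3 hx hc
        omega
      · have : xj = cj := by omega
        rw [this]

lemma le_iff_pos_srow {c x : ℕ × ℕ} (hc : InSkew α β c) (hx : InSkew α β x) :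
    Srow α β x ≤ Srow α β c ↔ (x.1 < c.1 ∨ (x.1 = c.1 ∧ x.2 ≤ c.2)) := by
  obtain ⟨i, j⟩ := c; obtain ⟨i', j'⟩ := x
  show _ ↔ (i' < i ∨ (i' = i ∧ j' ≤ j))
  have bc := srow_bounds hc
  have bx := srow_bounds hx
  have h1 := (inSkew_iff.1 hc).2.1
  have h2 := (inSkew_iff.1 hx).2.1
  constructor
  · intro hle
    rcases Nat.lt_trichotomy i' i with hlt | heq | hgt
    · left; exact hlt
    · right
      refine ⟨heq, ?_⟩
      subst heq
      rw [srow_apply hc, srow_apply hx] at hle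
      omega
    · exfalso
      have : SS α β (i + 1) ≤ SS α β i' := SS_mono hgt
      omega
  · rintro (hlt | ⟨heq, hle⟩)
    · have : SS α β (i' + 1) ≤ SS α β i := SS_mono hlt
      omega
    · subst heq
      rw [srow_apply hc, srow_apply hx]
      omega

/-- if no strict descent of rows among consecutive entries, the tableau is `Srow` -/
lemma eq_srow {T : ℕ × ℕ → ℕ} (hsub : SubComp β α) (hT : IsSIT α β T)
    (h : ∀ v c c', InSkew α β c → InSkew α β c' → T c = v → T c' = v + 1 →
      1 ≤ v → v + 1 ≤ skewSize α β → c.1 ≤ c'.1) :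
    T = Srow α β := by
  classical
  funext c
  by_cases hc : InSkew α β c
  · have e1 : ((skewCells α β).filter (fun x => T x ≤ T c)).card = T c :=
      card_filter_le hT hc
    have e2 : ((skewCells α β).filter (fun x => Srow α β x ≤ Srow α β c)).card
        = Srow α β c := card_filter_le (isSIT_srow hsub) hc
    have hset : (skewCells α β).filter (fun x => T x ≤ T c)
        = (skewCells α β).filter (fun x => Srow α β x ≤ Srow α β c) := by
      apply Finset.filter_congr
      intro x hxmem
      have hx := mem_skewCells.1 hxmem
      rw [le_iff_pos_T hT h hc hx, le_iff_pos_srow hc hx]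
    rw [hset, e2] at e1
    exact e1.symm
  · rw [hT.1.zero_off c hc]
    unfold Srow
    rw [if_neg hc]

/-- swapping a strict row-descent pair preserves being a SIT -/
lemma swap_sit {T : ℕ × ℕ → ℕ} (hT : IsSIT α β T) {v : ℕ} {c c' : ℕ × ℕ}
    (hv1 : 1 ≤ v) (hv2 : v + 1 ≤ skewSize α β)
    (hc : InSkew α β c) (hc' : InSkew α β c') (hTc : T c = v) (hTc' : T c' = v + 1)
    (hrow : c'.1 < c.1) : IsSIT α β (swapEntries v T) := by
  refine ⟨⟨?_, ?_, ?_, ?_⟩, ?_, ?_⟩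
  · intro x hx
    have h0 := hT.1.zero_off x hx
    unfold swapEntries
    rw [h0, if_neg (by omega), if_neg (by omega)]
  · intro x hx
    have hm := hT.1.mem x hx
    rw [Finset.mem_Icc] at hm
    unfold swapEntries
    rw [Finset.mem_Icc]
    split_ifs <;> omega
  · intro x y hx hy hxy
    unfold swapEntries at hxy
    split_ifs at hxy <;> exact hT.1.inj x y hx hy (by omega)
  · intro w hw
    rw [Finset.mem_Icc] at hw
    by_cases h1 : w = v
    · refine ⟨c', hc', ?_⟩
      unfold swapEntries
      rw [hTc', if_neg (by omega), if_pos rfl]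
      omega
    · by_cases h2 : w = v + 1
      · refine ⟨c, hc, ?_⟩
        unfold swapEntries
        rw [hTc, if_pos rfl]
        omega
      · obtain ⟨x, hx1, hx2⟩ := hT.1.surj w (Finset.mem_Icc.2 hw)
        refine ⟨x, hx1, ?_⟩
        unfold swapEntries
        rw [hx2, if_neg (by omega), if_neg (by omega)]
  · intro i j j' hjj hx hy
    have base := hT.2.1 i j j' hjj hx hy
    have key1 : ¬(T (i, j) = v ∧ T (i, j') = v + 1) := by
      rintro ⟨e1, e2⟩
      have q1 : (i, j) = c := hT.1.inj _ _ hx hc (by omega)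
      have q2 : (i, j') = c' := hT.1.inj _ _ hy hc' (by omega)
      have r1 := congrArg Prod.fst q1
      have r2 := congrArg Prod.fst q2
      simp only at r1 r2
      omega
    unfold swapEntries
    split_ifs <;> omega
  · intro i i' hii hx hy
    have base := hT.2.2 i i' hii hx hy
    have key1 : ¬(T (i, 0) = v ∧ T (i', 0) = v + 1) := by
      rintro ⟨e1, e2⟩
      have q1 : ((i, 0) : ℕ × ℕ) = c := hT.1.inj _ _ hx hc (by omega)
      have q2 : ((i', 0) : ℕ × ℕ) = c' := hT.1.inj _ _ hy hc' (by omega)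
      have r1 := congrArg Prod.fst q1
      have r2 := congrArg Prod.fst q2
      simp only at r1 r2
      omega
    unfold swapEntries
    split_ifs <;> omega

/-- the inversion measure: weighted sum of entries by their row index -/
noncomputable def mu (α β : List ℕ) (T : ℕ × ℕ → ℕ) : ℕ :=
  ∑ x ∈ skewCells α β, T x * x.1

lemma mu_le {T : ℕ × ℕ → ℕ} (hT : IsSIT α β T) :
    mu α β T ≤ (skewCells α β).card * (skewSize α β * α.length) := by
  unfold mu
  have := Finset.sum_le_card_nsmul (skewCells α β) (fun x => T x * x.1)
    (skewSize α β * α.length) (fun x hx => by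
      have hm := hT.1.mem x (mem_skewCells.1 hx)
      rw [Finset.mem_Icc] at hm
      have hr : x.1 < α.length := (mem_skewCells.1 hx).1.1
      exact Nat.mul_le_mul hm.2 (by omega))
  simpa using this

lemma mu_lt_swap {T : ℕ × ℕ → ℕ} (hT : IsSIT α β T) {v : ℕ} {c c' : ℕ × ℕ}
    (hv1 : 1 ≤ v)
    (hc : InSkew α β c) (hc' : InSkew α β c') (hTc : T c = v) (hTc' : T c' = v + 1)
    (hrow : c'.1 < c.1) : mu α β T < mu α β (swapEntries v T) := by
  classical
  have hne : c' ≠ c := fun h => by rw [h] at hTc'; omega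
  have hcm : c ∈ skewCells α β := mem_skewCells.2 hc
  have hc'm : c' ∈ (skewCells α β).erase c := Finset.mem_erase.2 ⟨hne, mem_skewCells.2 hc'⟩
  set s2 := ((skewCells α β).erase c).erase c' with hs2
  have key : ∀ x ∈ s2, swapEntries v T x = T x := by
    intro x hx
    rw [hs2, Finset.mem_erase, Finset.mem_erase] at hx
    have hxk : InSkew α β x := mem_skewCells.1 hx.2.2
    have n1 : T x ≠ v := fun h => hx.2.1 (hT.1.inj x c hxk hc (by omega))
    have n2 : T x ≠ v + 1 := fun h => hx.1 (hT.1.inj x c' hxk hc' (by omega))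
    unfold swapEntries
    rw [if_neg n1, if_neg n2]
  have split : ∀ f : ℕ × ℕ → ℕ, ∑ x ∈ skewCells α β, f x
      = f c + (f c' + ∑ x ∈ s2, f x) := by
    intro f
    rw [← Finset.add_sum_erase _ f hcm, ← Finset.add_sum_erase _ f hc'm]
  unfold mu
  rw [split (fun x => T x * x.1), split (fun x => swapEntries v T x * x.1)]
  have R : ∑ x ∈ s2, swapEntries v T x * x.1 = ∑ x ∈ s2, T x * x.1 :=
    Finset.sum_congr rfl (fun x hx => by rw [key x hx])
  rw [R]
  have e1 : swapEntries v T c = v + 1 := by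
    unfold swapEntries; rw [hTc, if_pos rfl]
  have e2 : swapEntries v T c' = v := by
    unfold swapEntries; rw [hTc', if_neg (by omega), if_pos rfl]
  rw [e1, e2, hTc, hTc']
  have q1 : (v + 1) * c.1 = v * c.1 + c.1 := by ring
  have q2 : (v + 1) * c'.1 = v * c'.1 + c'.1 := by ring
  omega

/-- existence of an improving step for any non-`Srow` tableau -/
lemma exists_step (hsub : SubComp β α) {T : ℕ × ℕ → ℕ} (hT : IsSIT α β T)
    (hne : T ≠ Srow α β) :
    ∃ v, 1 ≤ v ∧ v ≤ skewSize α β - 1 ∧ IsSIT α β (swapEntries v T) ∧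
      piOp .rdI α β v T = swapEntries v T ∧ mu α β T < mu α β (swapEntries v T) := by
  by_cases hall : ∀ v c c', InSkew α β c → InSkew α β c' → T c = v → T c' = v + 1 →
      1 ≤ v → v + 1 ≤ skewSize α β → c.1 ≤ c'.1
  · exact absurd (eq_srow hsub hT hall) hne
  · push_neg at hall
    obtain ⟨v, c, c', hc, hc', hTc, hTc', hv1, hv2, hrow⟩ := hall
    have hsit := swap_sit hT hv1 hv2 hc hc' hTc hTc' hrow
    have hdes : v ∈ Des .rdI α β T := by
      unfold Des
      rw [Finset.mem_filter]
      exact ⟨Finset.mem_Icc.2 ⟨hv1, by omega⟩, c, c', hc, hc', hTc, hTc', le_of_lt hrow⟩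
    refine ⟨v, hv1, by omega, hsit, ?_, mu_lt_swap hT hv1 hc hc' hTc hTc' hrow⟩
    unfold piOp
    rw [if_pos hdes, if_pos hsit]

/-- construction of the saturated chain, by induction on the remaining measure -/
lemma chain_aux (hsub : SubComp β α) :
    ∀ n : ℕ, ∀ T : ℕ × ℕ → ℕ, IsSIT α β T →
      (skewCells α β).card * (skewSize α β * α.length) - mu α β T ≤ n →
      ∃ (r : ℕ) (js : Fin r → ℕ) (Ts : Fin (r + 1) → ℕ × ℕ → ℕ),
        Ts 0 = T ∧ Ts (Fin.last r) = Srow α β ∧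
        (∀ i, IsSIT α β (Ts i)) ∧
        (∀ i : Fin r, mu α β (Ts i.castSucc) < mu α β (Ts i.succ)) ∧
        (∀ i : Fin r, 1 ≤ js i ∧ js i ≤ skewSize α β - 1 ∧
          piOp .rdI α β (js i) (Ts i.castSucc) = Ts i.succ) := by
  intro n
  induction n with
  | zero =>
    intro T hT hb
    by_cases hne : T = Srow α β
    · exact ⟨0, Fin.elim0, fun _ => Srow α β, by rw [hne], rfl,
        fun _ => isSIT_srow hsub, fun i => i.elim0, fun i => i.elim0⟩
    · obtain ⟨v, _, _, hsit, _, hlt⟩ := exists_step hsub hT hne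
      have := mu_le hsit
      omega
  | succ n ih =>
    intro T hT hb
    by_cases hne : T = Srow α β
    · exact ⟨0, Fin.elim0, fun _ => Srow α β, by rw [hne], rfl,
        fun _ => isSIT_srow hsub, fun i => i.elim0, fun i => i.elim0⟩
    · obtain ⟨v, hv1, hv2, hsit, hpi, hlt⟩ := exists_step hsub hT hne
      have hble := mu_le hsit
      obtain ⟨r, js, Ts, h0, hlast, hall, hmono, hsteps⟩ :=
        ih (swapEntries v T) hsit (by omega)
      refine ⟨r + 1, Fin.cases v js, Fin.cases T Ts, ?_, ?_, ?_, ?_, ?_⟩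
      · simp
      · rw [← Fin.succ_last]
        simp only [Fin.cases_succ]
        exact hlast
      · intro i
        induction i using Fin.cases with
        | zero => simpa using hT
        | succ j => simpa using hall j
      · intro i
        induction i using Fin.cases with
        | zero =>
          show mu α β (Fin.cases T Ts (Fin.castSucc 0)) < mu α β (Fin.cases T Ts (Fin.succ 0))
          simp only [Fin.castSucc_zero, Fin.cases_zero, Fin.cases_succ, h0]
          exact hlt
        | succ j =>
          show mu α β (Fin.cases T Ts (j.castSucc.succ)) < mu α β (Fin.cases T Ts (j.succ.succ))
          simp only [Fin.cases_succ]
          exact hmono j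
      · intro i
        induction i using Fin.cases with
        | zero =>
          refine ⟨by simpa using hv1, by simpa using hv2, ?_⟩
          show piOp Variant.rdI α β (Fin.cases v js 0)
            (Fin.cases T Ts (Fin.castSucc 0)) = Fin.cases T Ts (Fin.succ 0)
          simp only [Fin.castSucc_zero, Fin.cases_zero, Fin.cases_succ, h0]
          exact hpi
        | succ j =>
          refine ⟨by simpa using (hsteps j).1, by simpa using (hsteps j).2.1, ?_⟩
          show piOp Variant.rdI α β (Fin.cases v js j.succ)
            (Fin.cases T Ts (j.castSucc.succ)) = Fin.cases T Ts (j.succ.succ)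
          simp only [Fin.cases_succ]
          exact (hsteps j).2.2

/-- reachability of `Srow`, by induction on the remaining measure -/
lemma reach_aux (hsub : SubComp β α) :
    ∀ n : ℕ, ∀ T : ℕ × ℕ → ℕ, IsSIT α β T →
      (skewCells α β).card * (skewSize α β * α.length) - mu α β T ≤ n →
      reach .rdI α β T (Srow α β) := by
  intro n
  induction n with
  | zero =>
    intro T hT hb
    by_cases hne : T = Srow α β
    · rw [hne]; exact Relation.ReflTransGen.refl
    · obtain ⟨v, _, _, hsit, _, hlt⟩ := exists_step hsub hT hne
      have := mu_le hsit
      omega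
  | succ n ih =>
    intro T hT hb
    by_cases hne : T = Srow α β
    · rw [hne]; exact Relation.ReflTransGen.refl
    · obtain ⟨v, hv1, hv2, hsit, hpi, hlt⟩ := exists_step hsub hT hne
      have hble := mu_le hsit
      exact Relation.ReflTransGen.head ⟨hsit, v, hv1, hv2, hpi⟩
        (ih (swapEntries v T) hsit (by omega))

end Aux

/-- every tableau in `SIT(α/β)` reaches `S^{row}_{α/β}` by a saturated chain of
`rdI`-operators; in particular `S^{row}_{α/β}` is the unique maximal element of the skew
immaculate Hecke poset. -/
theorem skew_Srow_unique_maximal (α β : List ℕ)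
    (hα : IsComposition α) (hβ : IsComposition β) (hsub : SubComp β α)
    (hN : 1 ≤ skewSize α β) :
    IsSIT α β (Srow α β) ∧
    (∀ T, IsSIT α β T → T ≠ Srow α β →
      ∃ (r : ℕ) (js : Fin r → ℕ) (Ts : Fin (r + 1) → ℕ × ℕ → ℕ),
        Ts 0 = T ∧ Ts (Fin.last r) = Srow α β ∧
        (∀ i, IsSIT α β (Ts i)) ∧ Function.Injective Ts ∧
        (∀ i : Fin r, 1 ≤ js i ∧ js i ≤ skewSize α β - 1 ∧
          piOp .rdI α β (js i) (Ts i.castSucc) = Ts i.succ)) ∧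
    (∀ T, IsSIT α β T → reach .rdI α β T (Srow α β)) := by
  refine ⟨isSIT_srow hsub, ?_, fun T hT => reach_aux hsub _ T hT le_rfl⟩
  intro T hT hne
  obtain ⟨r, js, Ts, h0, hlast, hall, hmono, hsteps⟩ :=
    chain_aux hsub ((skewCells α β).card * (skewSize α β * α.length) - mu α β T) T hT le_rfl
  refine ⟨r, js, Ts, h0, hlast, hall, ?_, hsteps⟩
  have smono : StrictMono (fun i => mu α β (Ts i)) := by
    rw [Fin.strictMono_iff_lt_succ]
    intro i
    exact hmono i
  intro i j hij
  by_contra hcon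
  rcases Ne.lt_or_gt hcon with h | h
  · exact absurd (congrArg (mu α β) hij) (Nat.ne_of_lt (smono h))
  · exact absurd (congrArg (mu α β) hij) (Nat.ne_of_gt (smono h))

end ImmaculateSkew
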